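/- Under the unique-optimum assumption, there exists δ̄ > 0 such that for every δ with 0 ≤ δ ≤ δ̄: D̂_δ ≤ D_δ ≤ 2·D̂_δ and r_δ = δ/(‖x*‖₁ + ‖s*‖₁), where D̂_δ := δ · max{ max_{1≤j≤n−m} √(‖(B⁻¹N)_{·,j}‖² + 1)/s*_{m+j}, max_{1≤i≤m} √(‖(B⁻¹N)_{i,·}‖² + 1)/x*_i }. -/

import Mathlib

open Matrix
open scoped BigOperators

noncomputable section

namespace LPPaper

/-- Euclidean norm of a finite real vector. -/
def enorm {k : ℕ} (v : Fin k → ℝ) : ℝ := Real.sqrt (∑ i, (v i) ^ 2)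

/-- ℓ₁ norm of a finite real vector. -/
def l1 {k : ℕ} (v : Fin k → ℝ) : ℝ := ∑ i, |v i|

/-- Spectral norm (operator 2-norm w.r.t. Euclidean norms) of a real matrix. -/
def specNorm {α β : Type*} [Fintype α] [Fintype β] [DecidableEq β] (M : Matrix α β ℝ) : ℝ :=
  ‖LinearMap.toContinuousLinearMap (Matrix.toEuclideanLin M)‖

variable {m n : ℕ}

/-- Embedding of basic indices (the first `m` coordinates). -/
def bIdx (hmn : m ≤ n) (i : Fin m) : Fin n := Fin.castLE hmn i

/-- Embedding of nonbasic indices (the last `n - m` coordinates). -/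
def nIdx (hmn : m ≤ n) (j : Fin (n - m)) : Fin n := ⟨m + j.val, by have := j.isLt; omega⟩

/-- The basis matrix `B`: the first `m` columns of `A`. -/
def Bmat (hmn : m ≤ n) (A : Matrix (Fin m) (Fin n) ℝ) : Matrix (Fin m) (Fin m) ℝ :=
  Matrix.of fun i j => A i (bIdx hmn j)

/-- The nonbasic matrix `N`: the last `n - m` columns of `A`. -/
def Nmat (hmn : m ≤ n) (A : Matrix (Fin m) (Fin n) ℝ) : Matrix (Fin m) (Fin (n - m)) ℝ :=
  Matrix.of fun i j => A i (nIdx hmn j)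

/-- The simplex tableau `B⁻¹N` at the optimal basis. -/
def BN (hmn : m ≤ n) (A : Matrix (Fin m) (Fin n) ℝ) : Matrix (Fin m) (Fin (n - m)) ℝ :=
  (Bmat hmn A)⁻¹ * Nmat hmn A

/-- `q := Aᵀ(AAᵀ)⁻¹ b`. -/
def qvec (A : Matrix (Fin m) (Fin n) ℝ) (b : Fin m → ℝ) : Fin n → ℝ :=
  Aᵀ *ᵥ ((A * Aᵀ)⁻¹ *ᵥ b)

/-- Primal feasibility: `Ax = b`, `x ≥ 0`. -/
def PrimalFeasible (A : Matrix (Fin m) (Fin n) ℝ) (b : Fin m → ℝ) (x : Fin n → ℝ) : Prop :=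
  A *ᵥ x = b ∧ ∀ i, 0 ≤ x i

/-- Dual feasibility: `Aᵀy + s = c`, `s ≥ 0`. -/
def DualFeasible (A : Matrix (Fin m) (Fin n) ℝ) (c : Fin n → ℝ) (y : Fin m → ℝ)
    (s : Fin n → ℝ) : Prop :=
  Aᵀ *ᵥ y + s = c ∧ ∀ i, 0 ≤ s i

/-- The unique-optimum assumption (Assumption 1 of the paper), with the optimal basis being
(after a permutation of the variables) the set of the first `m` indices: the rows of `A` are
linearly independent, `x*` is the unique primal optimal solution, `(y*, s*)` the unique dual
optimal solution, the basis matrix `B` is invertible, `x*ᵢ > 0` exactly for the first `m`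
indices and `s*ᵢ > 0` exactly for the remaining indices. -/
structure UniqueOpt (hmn : m ≤ n) (A : Matrix (Fin m) (Fin n) ℝ) (b : Fin m → ℝ)
    (c : Fin n → ℝ) (xstar : Fin n → ℝ) (ystar : Fin m → ℝ) (sstar : Fin n → ℝ) : Prop where
  rows_indep : LinearIndependent ℝ (fun i => A i)
  primal_feas : PrimalFeasible A b xstar
  primal_opt : ∀ x, PrimalFeasible A b x → c ⬝ᵥ xstar ≤ c ⬝ᵥ x
  primal_uniq : ∀ x, PrimalFeasible A b x → c ⬝ᵥ x = c ⬝ᵥ xstar → x = xstar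
  dual_feas : DualFeasible A c ystar sstar
  dual_opt : ∀ y s, DualFeasible A c y s → b ⬝ᵥ y ≤ b ⬝ᵥ ystar
  dual_uniq : ∀ y s, DualFeasible A c y s → b ⬝ᵥ y = b ⬝ᵥ ystar → y = ystar ∧ s = sstar
  basis_isUnit : IsUnit (Bmat hmn A).det
  xstar_supp : ∀ i : Fin n, 0 < xstar i ↔ (i : ℕ) < m
  sstar_supp : ∀ i : Fin n, 0 < sstar i ↔ m ≤ (i : ℕ)

/-- The `max` factor appearing in the geometric condition number `Φ`. -/
def PhiFactor (hmn : m ≤ n) (A : Matrix (Fin m) (Fin n) ℝ) (xstar sstar : Fin n → ℝ) : ℝ :=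
  max (⨆ j : Fin (n - m),
        Real.sqrt ((∑ i, (BN hmn A i j) ^ 2) + 1) / sstar (nIdx hmn j))
      (⨆ i : Fin m,
        Real.sqrt ((∑ j, (BN hmn A i j) ^ 2) + 1) / xstar (bIdx hmn i))

/-- The geometric condition number `Φ`. -/
def Phi (hmn : m ≤ n) (A : Matrix (Fin m) (Fin n) ℝ) (xstar sstar : Fin n → ℝ) : ℝ :=
  (l1 xstar + l1 sstar) * PhiFactor hmn A xstar sstar


/-- Slack-form dual feasibility: `s ∈ c + Im(Aᵀ)` and `s ≥ 0`. -/
def SlackFeasible (A : Matrix (Fin m) (Fin n) ℝ) (c : Fin n → ℝ) (s : Fin n → ℝ) : Prop :=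
  (∃ y, s = c + Aᵀ *ᵥ y) ∧ ∀ i, 0 ≤ s i

/-- The duality gap `Gap(x,s) = cᵀx - qᵀ(c - s)`. -/
def Gap (A : Matrix (Fin m) (Fin n) ℝ) (b : Fin m → ℝ) (c : Fin n → ℝ)
    (x s : Fin n → ℝ) : ℝ :=
  c ⬝ᵥ x - qvec A b ⬝ᵥ (c - s)

/-- The `δ`-sublevel set `W_δ ⊆ ℝⁿ × ℝⁿ` of primal-dual feasible pairs with gap at most `δ`. -/
def Wlev (A : Matrix (Fin m) (Fin n) ℝ) (b : Fin m → ℝ) (c : Fin n → ℝ) (δ : ℝ) :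
    Set ((Fin n → ℝ) × (Fin n → ℝ)) :=
  {w | PrimalFeasible A b w.1 ∧ SlackFeasible A c w.2 ∧ Gap A b c w.1 w.2 ≤ δ}

/-- Euclidean norm on `ℝⁿ × ℝⁿ ≅ ℝ²ⁿ`. -/
def pairNorm (w : (Fin n → ℝ) × (Fin n → ℝ)) : ℝ :=
  Real.sqrt ((∑ i, (w.1 i) ^ 2) + ∑ i, (w.2 i) ^ 2)

/-- The diameter `D_δ` of the sublevel set `W_δ`. -/
def Ddiam (A : Matrix (Fin m) (Fin n) ℝ) (b : Fin m → ℝ) (c : Fin n → ℝ) (δ : ℝ) : ℝ :=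
  sSup {d | ∃ u ∈ Wlev A b c δ, ∃ v ∈ Wlev A b c δ, d = pairNorm (u - v)}

/-- The conic radius `r_δ` of the sublevel set `W_δ` (`min` over all `2n` coordinates). -/
def rrad (A : Matrix (Fin m) (Fin n) ℝ) (b : Fin m → ℝ) (c : Fin n → ℝ) (δ : ℝ) : ℝ :=
  sSup {t | ∃ w ∈ Wlev A b c δ, t = min (⨅ i, w.1 i) (⨅ i, w.2 i)}

/-- The geometric condition number `Φ̂ := liminf_{δ → 0⁺} D_δ / r_δ`. -/
def PhiHat (A : Matrix (Fin m) (Fin n) ℝ) (b : Fin m → ℝ) (c : Fin n → ℝ) : ℝ :=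
  Filter.liminf (fun δ => Ddiam A b c δ / rrad A b c δ) (nhdsWithin 0 (Set.Ioi (0:ℝ)))

/-!
Every feasible pair is reached from the optimal vertex along its edges: `x = x* + P x_N` and
`s = s* + Q s_B`, where the columns of `P = [-B⁻¹N; I]` and `Q = [I; (B⁻¹N)ᵀ]` are the edge
directions of the primal and dual feasible sets at `x*` and `s*`. Since the two directions are
orthogonal and `x*`, `s*` are strictly complementary, the duality gap is `x_Nᵀ s*_N + x*_Bᵀ s_B`.
The triangle inequality over the edges bounds `‖(x, s) - (x*, s*)‖` by `Gap(x, s) · D̂_δ / δ`,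
which gives `D_δ ≤ 2 D̂_δ`; conversely, moving by `δ / s*_j` along the `j`-th primal edge
(or by `δ / x*_i` along the `i`-th dual edge) stays feasible for small `δ` and realises `D̂_δ`.
For the radius, every coordinate `≥ t` forces `gap ≥ t (‖x*‖₁ + ‖s*‖₁)`, and moving by
`t = δ / (‖x*‖₁ + ‖s*‖₁)` along the sum of all edges attains this bound.
-/

open Filter Topology

lemma eventually_nonneg_add_smul {ι : Type*} [Finite ι] {x d : ι → ℝ} (hx : 0 ≤ x)
    (hd : ∀ i, x i = 0 → 0 ≤ d i) : ∀ᶠ t in 𝓝 (0 : ℝ), 0 ≤ t → 0 ≤ x + t • d := by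
  have key : ∀ i, ∀ᶠ t in 𝓝 (0 : ℝ), 0 ≤ t → 0 ≤ x i + t * d i := by
    intro i
    rcases (hx i).eq_or_lt with hxi | hxi
    · exact Eventually.of_forall fun t ht => by
        rw [← hxi, Pi.zero_apply, zero_add]; exact mul_nonneg ht (hd i hxi.symm)
    · have hlim : Tendsto (fun t => x i + t * d i) (𝓝 0) (𝓝 (x i)) :=
        (by fun_prop : Continuous fun t => x i + t * d i).tendsto' 0 (x i) (by simp)
      filter_upwards [hlim.eventually (lt_mem_nhds hxi)] with t ht _ using ht.le
  filter_upwards [eventually_all.2 key] with t ht ht₀ i using ht i ht₀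

lemma sum_mul_le_sum_mul_mul_iSup_div {ι : Type*} [Fintype ι] {a w : ι → ℝ} (f : ι → ℝ)
    (ha : 0 ≤ a) (hw : ∀ i, 0 < w i) :
    ∑ i, a i * f i ≤ (∑ i, a i * w i) * ⨆ i, f i / w i := by
  rw [Finset.sum_mul]
  refine Finset.sum_le_sum fun i _ => ?_
  calc a i * f i = a i * w i * (f i / w i) := by field_simp [(hw i).ne']
    _ ≤ a i * w i * ⨆ i, f i / w i :=
      mul_le_mul_of_nonneg_left
        (le_ciSup (f := fun i => f i / w i) (Set.finite_range _).bddAbove i)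
        (mul_nonneg (ha i) (hw i).le)

section Blocks

variable (hmn : m ≤ n)

def blockEquiv : Fin m ⊕ Fin (n - m) ≃ Fin n :=
  finSumFinEquiv.trans (finCongr (Nat.add_sub_cancel' hmn))

@[simp]
lemma blockEquiv_inl (i : Fin m) : blockEquiv hmn (Sum.inl i) = bIdx hmn i := by
  simp [blockEquiv, bIdx, Fin.ext_iff]

@[simp]
lemma blockEquiv_inr (j : Fin (n - m)) : blockEquiv hmn (Sum.inr j) = nIdx hmn j := by
  simp [blockEquiv, nIdx, Fin.ext_iff]

lemma forall_fin_iff_basic_and_nonbasic {P : Fin n → Prop} :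
    (∀ k, P k) ↔ (∀ i, P (bIdx hmn i)) ∧ ∀ j, P (nIdx hmn j) := by
  simp [← (blockEquiv hmn).forall_congr_right, Sum.forall]

lemma funext_block {α : Type*} {f g : Fin n → α} (h₁ : ∀ i, f (bIdx hmn i) = g (bIdx hmn i))
    (h₂ : ∀ j, f (nIdx hmn j) = g (nIdx hmn j)) : f = g :=
  funext <| (forall_fin_iff_basic_and_nonbasic hmn).2 ⟨h₁, h₂⟩

lemma eq_of_comp_bIdx_of_comp_nIdx {α : Type*} {f g : Fin n → α}
    (h₁ : f ∘ bIdx hmn = g ∘ bIdx hmn) (h₂ : f ∘ nIdx hmn = g ∘ nIdx hmn) : f = g :=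
  funext_block hmn (congrFun h₁) (congrFun h₂)

lemma sum_eq_sum_basic_add_sum_nonbasic {M : Type*} [AddCommMonoid M] (f : Fin n → M) :
    ∑ k, f k = ∑ i, f (bIdx hmn i) + ∑ j, f (nIdx hmn j) := by
  simp [← (blockEquiv hmn).sum_comp, Fintype.sum_sum_type]

lemma dotProduct_eq_basic_add_nonbasic (u v : Fin n → ℝ) :
    u ⬝ᵥ v = (u ∘ bIdx hmn) ⬝ᵥ (v ∘ bIdx hmn) + (u ∘ nIdx hmn) ⬝ᵥ (v ∘ nIdx hmn) :=
  sum_eq_sum_basic_add_sum_nonbasic hmn _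

lemma mulVec_eq_basic_add_nonbasic (A : Matrix (Fin m) (Fin n) ℝ) (x : Fin n → ℝ) :
    A *ᵥ x = Bmat hmn A *ᵥ (x ∘ bIdx hmn) + Nmat hmn A *ᵥ (x ∘ nIdx hmn) :=
  funext fun i => dotProduct_eq_basic_add_nonbasic hmn (A i) x

lemma transpose_mulVec_comp_bIdx (A : Matrix (Fin m) (Fin n) ℝ) (y : Fin m → ℝ) :
    (Aᵀ *ᵥ y) ∘ bIdx hmn = (Bmat hmn A)ᵀ *ᵥ y := by
  ext i; simp [mulVec, dotProduct, Bmat]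

lemma transpose_mulVec_comp_nIdx (A : Matrix (Fin m) (Fin n) ℝ) (y : Fin m → ℝ) :
    (Aᵀ *ᵥ y) ∘ nIdx hmn = (Nmat hmn A)ᵀ *ᵥ y := by
  ext j; simp [mulVec, dotProduct, Nmat]

def blockVec {α : Type*} (u : Fin m → α) (v : Fin (n - m) → α) : Fin n → α :=
  fun k => Sum.elim u v ((blockEquiv hmn).symm k)

@[simp]
lemma blockVec_bIdx {α : Type*} (u : Fin m → α) (v : Fin (n - m) → α) (i : Fin m) :
    blockVec hmn u v (bIdx hmn i) = u i := by
  simp [blockVec, ← blockEquiv_inl]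

@[simp]
lemma blockVec_nIdx {α : Type*} (u : Fin m → α) (v : Fin (n - m) → α) (j : Fin (n - m)) :
    blockVec hmn u v (nIdx hmn j) = v j := by
  simp [blockVec, ← blockEquiv_inr]

def blockMat {ι : Type*} (M₁ : Matrix (Fin m) ι ℝ) (M₂ : Matrix (Fin (n - m)) ι ℝ) :
    Matrix (Fin n) ι ℝ :=
  Matrix.of fun k j => blockVec hmn (fun i => M₁ i j) (fun i => M₂ i j) k

@[simp]
lemma blockMat_bIdx {ι : Type*} (M₁ : Matrix (Fin m) ι ℝ) (M₂ : Matrix (Fin (n - m)) ι ℝ)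
    (i : Fin m) (j : ι) : blockMat hmn M₁ M₂ (bIdx hmn i) j = M₁ i j := by
  simp [blockMat]

@[simp]
lemma blockMat_nIdx {ι : Type*} (M₁ : Matrix (Fin m) ι ℝ) (M₂ : Matrix (Fin (n - m)) ι ℝ)
    (i : Fin (n - m)) (j : ι) : blockMat hmn M₁ M₂ (nIdx hmn i) j = M₂ i j := by
  simp [blockMat]

lemma blockMat_mulVec {ι : Type*} [Fintype ι] (M₁ : Matrix (Fin m) ι ℝ)
    (M₂ : Matrix (Fin (n - m)) ι ℝ) (u : ι → ℝ) :
    blockMat hmn M₁ M₂ *ᵥ u = blockVec hmn (M₁ *ᵥ u) (M₂ *ᵥ u) :=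
  funext_block hmn (fun i => by simp [mulVec, dotProduct])
    (fun j => by simp [mulVec, dotProduct])

end Blocks

section Euclidean

lemma enorm_eq_norm_toLp {k : ℕ} (v : Fin k → ℝ) : enorm v = ‖WithLp.toLp 2 v‖ := by
  simp [enorm, EuclideanSpace.norm_eq]

lemma enorm_smul {k : ℕ} (a : ℝ) (v : Fin k → ℝ) : enorm (a • v) = |a| * enorm v := by
  simp [enorm_eq_norm_toLp, norm_smul]

lemma enorm_mulVec_le {k : ℕ} {ι : Type*} [Fintype ι] (M : Matrix (Fin k) ι ℝ) (u : ι → ℝ) :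
    enorm (M *ᵥ u) ≤ ∑ j, |u j| * enorm (M.col j) := by
  have hM : M *ᵥ u = ∑ j, u j • M.col j := by
    ext i; simp [mulVec, dotProduct, mul_comm]
  rw [hM, enorm_eq_norm_toLp, WithLp.toLp_sum]
  refine (norm_sum_le _ _).trans_eq (Finset.sum_congr rfl fun j _ => ?_)
  rw [← enorm_smul, enorm_eq_norm_toLp]

lemma pairNorm_eq_enorm_append (w : (Fin n → ℝ) × (Fin n → ℝ)) :
    pairNorm w = enorm (Fin.append w.1 w.2) := by
  simp only [pairNorm, enorm, Fin.sum_univ_add, Fin.append_left, Fin.append_right]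

lemma pairNorm_sub_le_add (u v w : (Fin n → ℝ) × (Fin n → ℝ)) :
    pairNorm (u - v) ≤ pairNorm (u - w) + pairNorm (v - w) := by
  have happend : ∀ p q : (Fin n → ℝ) × (Fin n → ℝ),
      Fin.append (p - q).1 (p - q).2 = Fin.append p.1 p.2 - Fin.append q.1 q.2 := by
    intro p q; ext k
    refine Fin.addCases (fun i => ?_) (fun j => ?_) k <;>
      simp only [Fin.append_left, Fin.append_right, Prod.fst_sub, Prod.snd_sub, Pi.sub_apply]
  simp only [pairNorm_eq_enorm_append, happend, enorm_eq_norm_toLp, WithLp.toLp_sub]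
  rw [norm_sub_rev (WithLp.toLp 2 (Fin.append v.1 v.2))]
  exact norm_sub_le_norm_sub_add_norm_sub _ _ _

lemma pairNorm_le_enorm_add_enorm (w : (Fin n → ℝ) × (Fin n → ℝ)) :
    pairNorm w ≤ enorm w.1 + enorm w.2 := by
  have h₁ : 0 ≤ ∑ i, w.1 i ^ 2 := by positivity
  have h₂ : 0 ≤ ∑ i, w.2 i ^ 2 := by positivity
  rw [pairNorm, enorm, enorm, Real.sqrt_le_left (by positivity), add_sq,
    Real.sq_sqrt h₁, Real.sq_sqrt h₂]
  nlinarith [Real.sqrt_nonneg (∑ i, w.1 i ^ 2), Real.sqrt_nonneg (∑ i, w.2 i ^ 2)]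

@[simp]
lemma pairNorm_mk_zero (x : Fin n → ℝ) : pairNorm (x, 0) = enorm x := by
  simp [pairNorm, enorm]

@[simp]
lemma pairNorm_zero_mk (s : Fin n → ℝ) : pairNorm (0, s) = enorm s := by
  simp [pairNorm, enorm]

end Euclidean

section EdgeDirections

variable (hmn : m ≤ n) (A : Matrix (Fin m) (Fin n) ℝ)

def primalEdgeMat : Matrix (Fin n) (Fin (n - m)) ℝ := blockMat hmn (-BN hmn A) 1

def dualEdgeMat : Matrix (Fin n) (Fin m) ℝ := blockMat hmn 1 (BN hmn A)ᵀ

@[simp]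
lemma primalEdgeMat_mulVec_nIdx (u : Fin (n - m) → ℝ) (j : Fin (n - m)) :
    (primalEdgeMat hmn A *ᵥ u) (nIdx hmn j) = u j := by
  simp [primalEdgeMat, blockMat_mulVec]

@[simp]
lemma dualEdgeMat_mulVec_bIdx (v : Fin m → ℝ) (i : Fin m) :
    (dualEdgeMat hmn A *ᵥ v) (bIdx hmn i) = v i := by
  simp [dualEdgeMat, blockMat_mulVec]

lemma primalEdgeMat_mulVec_comp_bIdx (u : Fin (n - m) → ℝ) :
    (primalEdgeMat hmn A *ᵥ u) ∘ bIdx hmn = -(BN hmn A *ᵥ u) := by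
  ext i; simp [primalEdgeMat, blockMat_mulVec, Matrix.neg_mulVec]

lemma primalEdgeMat_mulVec_comp_nIdx (u : Fin (n - m) → ℝ) :
    (primalEdgeMat hmn A *ᵥ u) ∘ nIdx hmn = u :=
  funext (primalEdgeMat_mulVec_nIdx hmn A u)

lemma dualEdgeMat_mulVec_comp_bIdx (v : Fin m → ℝ) :
    (dualEdgeMat hmn A *ᵥ v) ∘ bIdx hmn = v :=
  funext (dualEdgeMat_mulVec_bIdx hmn A v)

lemma dualEdgeMat_mulVec_comp_nIdx (v : Fin m → ℝ) :
    (dualEdgeMat hmn A *ᵥ v) ∘ nIdx hmn = (BN hmn A)ᵀ *ᵥ v := by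
  ext j; simp [dualEdgeMat, blockMat_mulVec]

lemma enorm_primalEdgeMat_col (j : Fin (n - m)) :
    enorm ((primalEdgeMat hmn A).col j) = Real.sqrt ((∑ i, (BN hmn A i j) ^ 2) + 1) := by
  rw [enorm, sum_eq_sum_basic_add_sum_nonbasic hmn]
  simp [primalEdgeMat, Matrix.one_apply]

lemma enorm_dualEdgeMat_col (i : Fin m) :
    enorm ((dualEdgeMat hmn A).col i) = Real.sqrt ((∑ j, (BN hmn A i j) ^ 2) + 1) := by
  rw [enorm, sum_eq_sum_basic_add_sum_nonbasic hmn, add_comm]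
  simp [dualEdgeMat, Matrix.one_apply]

variable {hmn A}

lemma Bmat_mul_BN (hB : IsUnit (Bmat hmn A).det) : Bmat hmn A * BN hmn A = Nmat hmn A := by
  rw [BN, ← Matrix.mul_assoc, Matrix.mul_nonsing_inv _ hB, Matrix.one_mul]

lemma mulVec_primalEdgeMat_mulVec (hB : IsUnit (Bmat hmn A).det) (u : Fin (n - m) → ℝ) :
    A *ᵥ (primalEdgeMat hmn A *ᵥ u) = 0 := by
  rw [mulVec_eq_basic_add_nonbasic hmn, primalEdgeMat_mulVec_comp_bIdx,
    primalEdgeMat_mulVec_comp_nIdx, Matrix.mulVec_neg, Matrix.mulVec_mulVec, Bmat_mul_BN hB,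
    neg_add_cancel]

lemma eq_zero_of_mulVec_eq_zero_of_comp_nIdx (hB : IsUnit (Bmat hmn A).det) {d : Fin n → ℝ}
    (hd : A *ᵥ d = 0) (hN : d ∘ nIdx hmn = 0) : d = 0 := by
  rw [mulVec_eq_basic_add_nonbasic hmn, hN, Matrix.mulVec_zero, add_zero] at hd
  have hB' := Matrix.mulVec_injective_iff_isUnit.2 ((Matrix.isUnit_iff_isUnit_det _).2 hB)
  have hdB : d ∘ bIdx hmn = 0 := hB' (hd.trans (Matrix.mulVec_zero _).symm)
  exact eq_of_comp_bIdx_of_comp_nIdx hmn hdB hN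

lemma eq_primalEdgeMat_mulVec (hB : IsUnit (Bmat hmn A).det) {d : Fin n → ℝ}
    (hd : A *ᵥ d = 0) : d = primalEdgeMat hmn A *ᵥ (d ∘ nIdx hmn) := by
  refine sub_eq_zero.1 (eq_zero_of_mulVec_eq_zero_of_comp_nIdx hB ?_ ?_)
  · rw [Matrix.mulVec_sub, hd, mulVec_primalEdgeMat_mulVec hB, sub_zero]
  · rw [Pi.sub_comp, primalEdgeMat_mulVec_comp_nIdx, sub_self]

lemma dualEdgeMat_mulVec_eq (hB : IsUnit (Bmat hmn A).det) (v : Fin m → ℝ) :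
    dualEdgeMat hmn A *ᵥ v = Aᵀ *ᵥ ((Bmat hmn A)ᵀ⁻¹ *ᵥ v) := by
  have hBT : IsUnit (Bmat hmn A)ᵀ.det := by rwa [Matrix.det_transpose]
  refine eq_of_comp_bIdx_of_comp_nIdx hmn ?_ ?_
  · rw [dualEdgeMat_mulVec_comp_bIdx, transpose_mulVec_comp_bIdx, Matrix.mulVec_mulVec,
      Matrix.mul_nonsing_inv _ hBT, Matrix.one_mulVec]
  · rw [dualEdgeMat_mulVec_comp_nIdx, transpose_mulVec_comp_nIdx, Matrix.mulVec_mulVec, BN,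
      Matrix.transpose_mul, Matrix.transpose_nonsing_inv]

lemma transpose_mulVec_eq_dualEdgeMat_mulVec (hB : IsUnit (Bmat hmn A).det) (y : Fin m → ℝ) :
    Aᵀ *ᵥ y = dualEdgeMat hmn A *ᵥ ((Bmat hmn A)ᵀ *ᵥ y) := by
  have hBT : IsUnit (Bmat hmn A)ᵀ.det := by rwa [Matrix.det_transpose]
  rw [dualEdgeMat_mulVec_eq hB]
  congr 1
  rw [Matrix.mulVec_mulVec, Matrix.nonsing_inv_mul _ hBT, Matrix.one_mulVec]

lemma isUnit_mul_transpose (hB : IsUnit (Bmat hmn A).det) : IsUnit (A * Aᵀ) := by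
  have hBT := Matrix.vecMul_injective_iff_isUnit.2 ((Matrix.isUnit_iff_isUnit_det _).2 hB)
  have hA : Function.Injective fun v => v ᵥ* A := by
    refine Function.Injective.of_comp (f := (· ∘ bIdx hmn)) ?_
    convert hBT using 1
    ext v i
    simp [vecMul, dotProduct, Bmat]
  simpa [Matrix.conjTranspose_eq_transpose_of_trivial] using
    (Matrix.PosDef.mul_conjTranspose_self A hA).isUnit

lemma mulVec_qvec (hB : IsUnit (Bmat hmn A).det) (b : Fin m → ℝ) : A *ᵥ qvec A b = b := by
  rw [qvec, Matrix.mulVec_mulVec, Matrix.mulVec_mulVec,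
    Matrix.mul_nonsing_inv _ ((Matrix.isUnit_iff_isUnit_det _).1 (isUnit_mul_transpose hB)),
    Matrix.one_mulVec]

end EdgeDirections

lemma gap_eq_dotProduct {hmn : m ≤ n} {A : Matrix (Fin m) (Fin n) ℝ} {b : Fin m → ℝ}
    {c x s : Fin n → ℝ} (hB : IsUnit (Bmat hmn A).det) (hx : A *ᵥ x = b)
    (hs : ∃ y, s = c + Aᵀ *ᵥ y) : Gap A b c x s = x ⬝ᵥ s := by
  obtain ⟨y, rfl⟩ := hs
  have hAT : ∀ v : Fin n → ℝ, v ⬝ᵥ (Aᵀ *ᵥ y) = (A *ᵥ v) ⬝ᵥ y := fun v => by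
    rw [Matrix.dotProduct_mulVec, Matrix.vecMul_transpose]
  rw [Gap, sub_add_cancel_left, dotProduct_neg, hAT, mulVec_qvec hB, dotProduct_add, hAT, hx,
    dotProduct_comm c]
  ring

structure IsStrictlyComplementaryBasis (hmn : m ≤ n) (A : Matrix (Fin m) (Fin n) ℝ)
    (b : Fin m → ℝ) (c : Fin n → ℝ) (xstar sstar : Fin n → ℝ) : Prop where
  isUnit_det : IsUnit (Bmat hmn A).det
  mulVec_xstar : A *ᵥ xstar = b
  exists_sstar_eq : ∃ y, sstar = c + Aᵀ *ᵥ y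
  xstar_nIdx : ∀ j, xstar (nIdx hmn j) = 0
  sstar_bIdx : ∀ i, sstar (bIdx hmn i) = 0
  xstar_bIdx_pos : ∀ i, 0 < xstar (bIdx hmn i)
  sstar_nIdx_pos : ∀ j, 0 < sstar (nIdx hmn j)

lemma UniqueOpt.isStrictlyComplementaryBasis {hmn : m ≤ n} {A : Matrix (Fin m) (Fin n) ℝ}
    {b : Fin m → ℝ} {c xstar : Fin n → ℝ} {ystar : Fin m → ℝ} {sstar : Fin n → ℝ}
    (h : UniqueOpt hmn A b c xstar ystar sstar) :
    IsStrictlyComplementaryBasis hmn A b c xstar sstar where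
  isUnit_det := h.basis_isUnit
  mulVec_xstar := h.primal_feas.1
  exists_sstar_eq := ⟨-ystar, by rw [Matrix.mulVec_neg, ← h.dual_feas.1]; abel⟩
  xstar_nIdx j := le_antisymm (not_lt.1 fun hpos => by simpa [nIdx] using (h.xstar_supp _).1 hpos)
    (h.primal_feas.2 _)
  sstar_bIdx i :=
    le_antisymm (not_lt.1 fun hpos => absurd ((h.sstar_supp _).1 hpos) (by simp [bIdx]))
      (h.dual_feas.2 _)
  xstar_bIdx_pos i := (h.xstar_supp _).2 (by simp [bIdx])
  sstar_nIdx_pos j := (h.sstar_supp _).2 (by simp [nIdx])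

namespace IsStrictlyComplementaryBasis

variable {hmn : m ≤ n} {A : Matrix (Fin m) (Fin n) ℝ} {b : Fin m → ℝ}
  {c xstar sstar : Fin n → ℝ}

lemma xstar_comp_nIdx (hc : IsStrictlyComplementaryBasis hmn A b c xstar sstar) :
    xstar ∘ nIdx hmn = 0 :=
  funext hc.xstar_nIdx

lemma sstar_comp_bIdx (hc : IsStrictlyComplementaryBasis hmn A b c xstar sstar) :
    sstar ∘ bIdx hmn = 0 :=
  funext hc.sstar_bIdx

lemma xstar_nonneg (hc : IsStrictlyComplementaryBasis hmn A b c xstar sstar) : 0 ≤ xstar :=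
  (forall_fin_iff_basic_and_nonbasic hmn).2
    ⟨fun i => (hc.xstar_bIdx_pos i).le, fun j => (hc.xstar_nIdx j).ge⟩

lemma sstar_nonneg (hc : IsStrictlyComplementaryBasis hmn A b c xstar sstar) : 0 ≤ sstar :=
  (forall_fin_iff_basic_and_nonbasic hmn).2
    ⟨fun i => (hc.sstar_bIdx i).ge, fun j => (hc.sstar_nIdx_pos j).le⟩

lemma l1_xstar (hc : IsStrictlyComplementaryBasis hmn A b c xstar sstar) :
    l1 xstar = ∑ i, xstar (bIdx hmn i) := by
  simp [l1, sum_eq_sum_basic_add_sum_nonbasic hmn, hc.xstar_nIdx,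
    abs_of_pos (hc.xstar_bIdx_pos _)]

lemma l1_sstar (hc : IsStrictlyComplementaryBasis hmn A b c xstar sstar) :
    l1 sstar = ∑ j, sstar (nIdx hmn j) := by
  simp [l1, sum_eq_sum_basic_add_sum_nonbasic hmn, hc.sstar_bIdx,
    abs_of_pos (hc.sstar_nIdx_pos _)]

lemma l1_add_l1_pos [Nonempty (Fin n)] (hc : IsStrictlyComplementaryBasis hmn A b c xstar sstar) :
    0 < l1 xstar + l1 sstar := by
  rw [l1, l1, ← Finset.sum_add_distrib]
  refine Finset.sum_pos (fun k _ => ?_) Finset.univ_nonempty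
  revert k
  exact (forall_fin_iff_basic_and_nonbasic hmn).2
    ⟨fun i _ => add_pos_of_pos_of_nonneg (abs_pos.2 (hc.xstar_bIdx_pos i).ne') (abs_nonneg _),
      fun j _ => add_pos_of_nonneg_of_pos (abs_nonneg _) (abs_pos.2 (hc.sstar_nIdx_pos j).ne')⟩

lemma sub_xstar_eq (hc : IsStrictlyComplementaryBasis hmn A b c xstar sstar) {x : Fin n → ℝ}
    (hx : A *ᵥ x = b) : x - xstar = primalEdgeMat hmn A *ᵥ (x ∘ nIdx hmn) := by
  have hd : A *ᵥ (x - xstar) = 0 := by rw [Matrix.mulVec_sub, hx, hc.mulVec_xstar, sub_self]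
  rw [eq_primalEdgeMat_mulVec hc.isUnit_det hd, Pi.sub_comp, hc.xstar_comp_nIdx, sub_zero]

lemma sub_sstar_eq (hc : IsStrictlyComplementaryBasis hmn A b c xstar sstar) {s : Fin n → ℝ}
    (hs : ∃ y, s = c + Aᵀ *ᵥ y) : s - sstar = dualEdgeMat hmn A *ᵥ (s ∘ bIdx hmn) := by
  obtain ⟨y, rfl⟩ := hs
  obtain ⟨y₀, hy₀⟩ := hc.exists_sstar_eq
  have hd : c + Aᵀ *ᵥ y - sstar = Aᵀ *ᵥ (y - y₀) := by
    rw [hy₀, Matrix.mulVec_sub]; abel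
  rw [hd, transpose_mulVec_eq_dualEdgeMat_mulVec hc.isUnit_det, ← transpose_mulVec_comp_bIdx,
    ← hd, Pi.sub_comp, hc.sstar_comp_bIdx, sub_zero]

lemma dotProduct_sstar (hc : IsStrictlyComplementaryBasis hmn A b c xstar sstar)
    (v : Fin n → ℝ) : v ⬝ᵥ sstar = (v ∘ nIdx hmn) ⬝ᵥ (sstar ∘ nIdx hmn) := by
  rw [dotProduct_eq_basic_add_nonbasic hmn, hc.sstar_comp_bIdx, dotProduct_zero, zero_add]

lemma xstar_dotProduct (hc : IsStrictlyComplementaryBasis hmn A b c xstar sstar)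
    (v : Fin n → ℝ) : xstar ⬝ᵥ v = (xstar ∘ bIdx hmn) ⬝ᵥ (v ∘ bIdx hmn) := by
  rw [dotProduct_eq_basic_add_nonbasic hmn, hc.xstar_comp_nIdx, zero_dotProduct, add_zero]

lemma gap_eq (hc : IsStrictlyComplementaryBasis hmn A b c xstar sstar) {x s : Fin n → ℝ}
    (hx : A *ᵥ x = b) (hs : ∃ y, s = c + Aᵀ *ᵥ y) :
    Gap A b c x s =
      (x ∘ nIdx hmn) ⬝ᵥ (sstar ∘ nIdx hmn) + (xstar ∘ bIdx hmn) ⬝ᵥ (s ∘ bIdx hmn) := by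
  obtain ⟨y₀, hy₀⟩ := hc.exists_sstar_eq
  obtain ⟨y, hy⟩ := id hs
  have horth : (x - xstar) ⬝ᵥ (s - sstar) = 0 := by
    rw [hy, hy₀, add_sub_add_left_eq_sub, ← Matrix.mulVec_sub, Matrix.dotProduct_mulVec,
      Matrix.vecMul_transpose, Matrix.mulVec_sub, hx, hc.mulVec_xstar, sub_self, zero_dotProduct]
  have hcompl : xstar ⬝ᵥ sstar = 0 := by
    rw [hc.xstar_dotProduct, hc.sstar_comp_bIdx, dotProduct_zero]
  simp only [sub_dotProduct, dotProduct_sub] at horth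
  rw [gap_eq_dotProduct hc.isUnit_det hx hs, ← hc.dotProduct_sstar, ← hc.xstar_dotProduct]
  linarith

lemma add_edges_mem_Wlev (hc : IsStrictlyComplementaryBasis hmn A b c xstar sstar) {δ : ℝ}
    {u : Fin (n - m) → ℝ} {v : Fin m → ℝ} (hx : 0 ≤ xstar + primalEdgeMat hmn A *ᵥ u)
    (hs : 0 ≤ sstar + dualEdgeMat hmn A *ᵥ v)
    (hgap : u ⬝ᵥ (sstar ∘ nIdx hmn) + (xstar ∘ bIdx hmn) ⬝ᵥ v ≤ δ) :
    (xstar + primalEdgeMat hmn A *ᵥ u, sstar + dualEdgeMat hmn A *ᵥ v) ∈ Wlev A b c δ := by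
  have hAx : A *ᵥ (xstar + primalEdgeMat hmn A *ᵥ u) = b := by
    rw [Matrix.mulVec_add, mulVec_primalEdgeMat_mulVec hc.isUnit_det, add_zero, hc.mulVec_xstar]
  obtain ⟨y₀, hy₀⟩ := hc.exists_sstar_eq
  have hAs : ∃ y, sstar + dualEdgeMat hmn A *ᵥ v = c + Aᵀ *ᵥ y :=
    ⟨y₀ + (Bmat hmn A)ᵀ⁻¹ *ᵥ v, by
      rw [dualEdgeMat_mulVec_eq hc.isUnit_det, hy₀, Matrix.mulVec_add, add_assoc]⟩
  refine ⟨⟨hAx, hx⟩, ⟨hAs, hs⟩, ?_⟩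
  rwa [hc.gap_eq hAx hAs, Pi.add_comp, Pi.add_comp, hc.xstar_comp_nIdx, hc.sstar_comp_bIdx,
    primalEdgeMat_mulVec_comp_nIdx, dualEdgeMat_mulVec_comp_bIdx, zero_add, zero_add]

lemma star_mem_Wlev (hc : IsStrictlyComplementaryBasis hmn A b c xstar sstar) {δ : ℝ}
    (hδ : 0 ≤ δ) : (xstar, sstar) ∈ Wlev A b c δ := by
  simpa using hc.add_edges_mem_Wlev (u := 0) (v := 0) (by simpa using hc.xstar_nonneg)
    (by simpa using hc.sstar_nonneg) (by simpa using hδ)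

lemma PhiFactor_nonneg (hc : IsStrictlyComplementaryBasis hmn A b c xstar sstar) :
    0 ≤ PhiFactor hmn A xstar sstar :=
  le_max_of_le_left <| Real.iSup_nonneg fun j =>
    div_nonneg (Real.sqrt_nonneg _) (hc.sstar_nIdx_pos j).le

lemma pairNorm_sub_star_le (hc : IsStrictlyComplementaryBasis hmn A b c xstar sstar) {δ : ℝ}
    {w : (Fin n → ℝ) × (Fin n → ℝ)} (hw : w ∈ Wlev A b c δ) :
    pairNorm (w - (xstar, sstar)) ≤ δ * PhiFactor hmn A xstar sstar := by
  obtain ⟨⟨hx, hx₀⟩, ⟨hs, hs₀⟩, hgap⟩ := hw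
  rw [hc.gap_eq hx hs] at hgap
  have hxN : 0 ≤ w.1 ∘ nIdx hmn := fun j => hx₀ _
  have hsB : 0 ≤ w.2 ∘ bIdx hmn := fun i => hs₀ _
  calc pairNorm (w - (xstar, sstar)) ≤ enorm (w.1 - xstar) + enorm (w.2 - sstar) :=
        pairNorm_le_enorm_add_enorm _
    _ ≤ ∑ j, w.1 (nIdx hmn j) * Real.sqrt ((∑ i, (BN hmn A i j) ^ 2) + 1) +
          ∑ i, w.2 (bIdx hmn i) * Real.sqrt ((∑ j, (BN hmn A i j) ^ 2) + 1) := by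
        rw [hc.sub_xstar_eq hx, hc.sub_sstar_eq hs]
        refine add_le_add ((enorm_mulVec_le _ _).trans_eq ?_) ((enorm_mulVec_le _ _).trans_eq ?_)
        · simp [enorm_primalEdgeMat_col, abs_of_nonneg (hx₀ _)]
        · simp [enorm_dualEdgeMat_col, abs_of_nonneg (hs₀ _)]
    _ ≤ ((w.1 ∘ nIdx hmn) ⬝ᵥ (sstar ∘ nIdx hmn)) *
          (⨆ j, Real.sqrt ((∑ i, (BN hmn A i j) ^ 2) + 1) / sstar (nIdx hmn j)) +
        ((xstar ∘ bIdx hmn) ⬝ᵥ (w.2 ∘ bIdx hmn)) *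
          (⨆ i, Real.sqrt ((∑ j, (BN hmn A i j) ^ 2) + 1) / xstar (bIdx hmn i)) := by
        rw [dotProduct_comm (xstar ∘ bIdx hmn)]
        exact add_le_add (sum_mul_le_sum_mul_mul_iSup_div _ hxN hc.sstar_nIdx_pos)
          (sum_mul_le_sum_mul_mul_iSup_div _ hsB hc.xstar_bIdx_pos)
    _ ≤ ((w.1 ∘ nIdx hmn) ⬝ᵥ (sstar ∘ nIdx hmn) +
          (xstar ∘ bIdx hmn) ⬝ᵥ (w.2 ∘ bIdx hmn)) * PhiFactor hmn A xstar sstar := by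
        rw [add_mul]
        gcongr
        · exact Finset.sum_nonneg fun j _ => mul_nonneg (hxN j) (hc.sstar_nIdx_pos j).le
        · exact le_max_left _ _
        · exact Finset.sum_nonneg fun i _ => mul_nonneg (hc.xstar_bIdx_pos i).le (hsB i)
        · exact le_max_right _ _
    _ ≤ δ * PhiFactor hmn A xstar sstar := by gcongr; exact hc.PhiFactor_nonneg

lemma pairNorm_sub_le_two_mul (hc : IsStrictlyComplementaryBasis hmn A b c xstar sstar) {δ : ℝ}
    {u v : (Fin n → ℝ) × (Fin n → ℝ)} (hu : u ∈ Wlev A b c δ)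
    (hv : v ∈ Wlev A b c δ) :
    pairNorm (u - v) ≤ 2 * (δ * PhiFactor hmn A xstar sstar) := by
  linarith [pairNorm_sub_le_add u v (xstar, sstar), hc.pairNorm_sub_star_le hu,
    hc.pairNorm_sub_star_le hv]

lemma Ddiam_le (hc : IsStrictlyComplementaryBasis hmn A b c xstar sstar) {δ : ℝ}
    (hδ : 0 ≤ δ) : Ddiam A b c δ ≤ 2 * (δ * PhiFactor hmn A xstar sstar) := by
  refine Real.sSup_le ?_ (by have := hc.PhiFactor_nonneg; positivity)
  rintro _ ⟨u, hu, v, hv, rfl⟩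
  exact hc.pairNorm_sub_le_two_mul hu hv

lemma pairNorm_sub_le_Ddiam (hc : IsStrictlyComplementaryBasis hmn A b c xstar sstar) {δ : ℝ}
    {u v : (Fin n → ℝ) × (Fin n → ℝ)} (hu : u ∈ Wlev A b c δ)
    (hv : v ∈ Wlev A b c δ) :
    pairNorm (u - v) ≤ Ddiam A b c δ := by
  refine le_csSup ⟨2 * (δ * PhiFactor hmn A xstar sstar), ?_⟩ ⟨u, hu, v, hv, rfl⟩
  rintro _ ⟨u, hu, v, hv, rfl⟩
  exact hc.pairNorm_sub_le_two_mul hu hv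

lemma eventually_le_Ddiam_nonbasic (hc : IsStrictlyComplementaryBasis hmn A b c xstar sstar)
    (j : Fin (n - m)) : ∀ᶠ δ in 𝓝 0, 0 ≤ δ →
      δ * (Real.sqrt ((∑ i, (BN hmn A i j) ^ 2) + 1) / sstar (nIdx hmn j)) ≤
        Ddiam A b c δ := by
  set σ := sstar (nIdx hmn j)
  have hσ : 0 < σ := hc.sstar_nIdx_pos j
  have hdir : ∀ k, xstar k = 0 → 0 ≤ (σ⁻¹ • (primalEdgeMat hmn A).col j) k :=
    (forall_fin_iff_basic_and_nonbasic hmn).2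
      ⟨fun i hi => absurd hi (hc.xstar_bIdx_pos i).ne',
        fun j' _ => by simp [primalEdgeMat, Matrix.one_apply]; split_ifs <;> positivity⟩
  filter_upwards [eventually_nonneg_add_smul hc.xstar_nonneg hdir] with δ hfeas hδ
  have hedge : primalEdgeMat hmn A *ᵥ ((δ / σ) • Pi.single j 1) =
      δ • σ⁻¹ • (primalEdgeMat hmn A).col j := by
    rw [Matrix.mulVec_smul, Matrix.mulVec_single_one, smul_smul, div_eq_mul_inv]
  have hmem := hc.add_edges_mem_Wlev (δ := δ) (v := 0) (hedge ▸ hfeas hδ)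
    (by simpa using hc.sstar_nonneg) (by simpa using (div_mul_cancel₀ δ hσ.ne').le)
  calc δ * (Real.sqrt ((∑ i, (BN hmn A i j) ^ 2) + 1) / σ)
      = pairNorm ((xstar + primalEdgeMat hmn A *ᵥ ((δ / σ) • Pi.single j 1),
          sstar + dualEdgeMat hmn A *ᵥ 0) - (xstar, sstar)) := by
        rw [Matrix.mulVec_zero, add_zero, Prod.mk_sub_mk, add_sub_cancel_left, sub_self,
          pairNorm_mk_zero, hedge, enorm_smul, enorm_smul, enorm_primalEdgeMat_col,
          abs_of_nonneg hδ, abs_of_pos (inv_pos.2 hσ), div_eq_inv_mul]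
    _ ≤ Ddiam A b c δ := hc.pairNorm_sub_le_Ddiam hmem (hc.star_mem_Wlev hδ)

lemma eventually_le_Ddiam_basic (hc : IsStrictlyComplementaryBasis hmn A b c xstar sstar)
    (i : Fin m) : ∀ᶠ δ in 𝓝 0, 0 ≤ δ →
      δ * (Real.sqrt ((∑ j, (BN hmn A i j) ^ 2) + 1) / xstar (bIdx hmn i)) ≤
        Ddiam A b c δ := by
  set ξ := xstar (bIdx hmn i)
  have hξ : 0 < ξ := hc.xstar_bIdx_pos i
  have hdir : ∀ k, sstar k = 0 → 0 ≤ (ξ⁻¹ • (dualEdgeMat hmn A).col i) k :=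
    (forall_fin_iff_basic_and_nonbasic hmn).2
      ⟨fun i' _ => by simp [dualEdgeMat, Matrix.one_apply]; split_ifs <;> positivity,
        fun j hj => absurd hj (hc.sstar_nIdx_pos j).ne'⟩
  filter_upwards [eventually_nonneg_add_smul hc.sstar_nonneg hdir] with δ hfeas hδ
  have hedge : dualEdgeMat hmn A *ᵥ ((δ / ξ) • Pi.single i 1) =
      δ • ξ⁻¹ • (dualEdgeMat hmn A).col i := by
    rw [Matrix.mulVec_smul, Matrix.mulVec_single_one, smul_smul, div_eq_mul_inv]
  have hmem := hc.add_edges_mem_Wlev (δ := δ) (u := 0) (by simpa using hc.xstar_nonneg)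
    (hedge ▸ hfeas hδ) (by simpa [mul_comm] using (div_mul_cancel₀ δ hξ.ne').le)
  calc δ * (Real.sqrt ((∑ j, (BN hmn A i j) ^ 2) + 1) / ξ)
      = pairNorm ((xstar + primalEdgeMat hmn A *ᵥ 0,
          sstar + dualEdgeMat hmn A *ᵥ ((δ / ξ) • Pi.single i 1)) - (xstar, sstar)) := by
        rw [Matrix.mulVec_zero, add_zero, Prod.mk_sub_mk, add_sub_cancel_left, sub_self,
          pairNorm_zero_mk, hedge, enorm_smul, enorm_smul, enorm_dualEdgeMat_col,
          abs_of_nonneg hδ, abs_of_pos (inv_pos.2 hξ), div_eq_inv_mul]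
    _ ≤ Ddiam A b c δ := hc.pairNorm_sub_le_Ddiam hmem (hc.star_mem_Wlev hδ)

lemma eventually_mul_PhiFactor_le_Ddiam (hc : IsStrictlyComplementaryBasis hmn A b c xstar sstar) :
    ∀ᶠ δ in 𝓝 0, 0 ≤ δ → δ * PhiFactor hmn A xstar sstar ≤ Ddiam A b c δ := by
  filter_upwards [eventually_all.2 hc.eventually_le_Ddiam_nonbasic,
    eventually_all.2 hc.eventually_le_Ddiam_basic] with δ hnonbasic hbasic hδ
  have hD : 0 ≤ Ddiam A b c δ :=
    (Real.sqrt_nonneg _).trans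
      (hc.pairNorm_sub_le_Ddiam (hc.star_mem_Wlev hδ) (hc.star_mem_Wlev hδ))
  rw [PhiFactor, mul_max_of_nonneg _ _ hδ, Real.mul_iSup_of_nonneg hδ,
    Real.mul_iSup_of_nonneg hδ]
  exact max_le (Real.iSup_le (fun j => hnonbasic j hδ) hD)
    (Real.iSup_le (fun i => hbasic i hδ) hD)

lemma min_iInf_le_div (hc : IsStrictlyComplementaryBasis hmn A b c xstar sstar) [Nonempty (Fin n)]
    {δ : ℝ} {w : (Fin n → ℝ) × (Fin n → ℝ)} (hw : w ∈ Wlev A b c δ) :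
    min (⨅ k, w.1 k) (⨅ k, w.2 k) ≤ δ / (l1 xstar + l1 sstar) := by
  obtain ⟨⟨hx, -⟩, ⟨hs, -⟩, hgap⟩ := hw
  rw [hc.gap_eq hx hs] at hgap
  set t := min (⨅ k, w.1 k) (⨅ k, w.2 k)
  have hx₁ : ∀ k, t ≤ w.1 k := fun k =>
    (min_le_left _ _).trans (ciInf_le (Set.finite_range _).bddBelow k)
  have hs₁ : ∀ k, t ≤ w.2 k := fun k =>
    (min_le_right _ _).trans (ciInf_le (Set.finite_range _).bddBelow k)
  rw [le_div_iff₀ hc.l1_add_l1_pos, hc.l1_xstar, hc.l1_sstar, mul_add, add_comm,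
    Finset.mul_sum, Finset.mul_sum]
  refine le_trans (add_le_add (Finset.sum_le_sum fun j _ => ?_) (Finset.sum_le_sum fun i _ => ?_))
    hgap
  · exact mul_le_mul_of_nonneg_right (hx₁ _) (hc.sstar_nIdx_pos j).le
  · rw [mul_comm]; exact mul_le_mul_of_nonneg_left (hs₁ _) (hc.xstar_bIdx_pos i).le

lemma eventually_le_rrad (hc : IsStrictlyComplementaryBasis hmn A b c xstar sstar)
    [Nonempty (Fin n)] :
    ∀ᶠ δ in 𝓝 0, 0 ≤ δ → δ / (l1 xstar + l1 sstar) ≤ rrad A b c δ := by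
  set L := l1 xstar + l1 sstar
  have hL : 0 < L := hc.l1_add_l1_pos
  have hdirx : ∀ k, xstar k = 0 → 0 ≤ (L⁻¹ • (primalEdgeMat hmn A *ᵥ 1 - 1)) k :=
    (forall_fin_iff_basic_and_nonbasic hmn).2
      ⟨fun i hi => absurd hi (hc.xstar_bIdx_pos i).ne', fun j _ => by simp⟩
  have hdirs : ∀ k, sstar k = 0 → 0 ≤ (L⁻¹ • (dualEdgeMat hmn A *ᵥ 1 - 1)) k :=
    (forall_fin_iff_basic_and_nonbasic hmn).2
      ⟨fun i _ => by simp, fun j hj => absurd hj (hc.sstar_nIdx_pos j).ne'⟩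
  filter_upwards [eventually_nonneg_add_smul hc.xstar_nonneg hdirx,
    eventually_nonneg_add_smul hc.sstar_nonneg hdirs] with δ hx hs hδ
  set t := δ / L
  have ht : 0 ≤ t := div_nonneg hδ hL.le
  have hxt : ∀ k, t ≤ (xstar + primalEdgeMat hmn A *ᵥ (t • 1)) k := fun k => by
    have := hx hδ k
    simp only [Matrix.mulVec_smul, Pi.add_apply, Pi.smul_apply, Pi.sub_apply, Pi.one_apply,
      Pi.zero_apply, smul_eq_mul] at this ⊢
    linear_combination this
  have hst : ∀ k, t ≤ (sstar + dualEdgeMat hmn A *ᵥ (t • 1)) k := fun k => by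
    have := hs hδ k
    simp only [Matrix.mulVec_smul, Pi.add_apply, Pi.smul_apply, Pi.sub_apply, Pi.one_apply,
      Pi.zero_apply, smul_eq_mul] at this ⊢
    linear_combination this
  have hgap :
      (t • 1) ⬝ᵥ (sstar ∘ nIdx hmn) + (xstar ∘ bIdx hmn) ⬝ᵥ (t • 1) = t * L := by
    simp only [L, hc.l1_xstar, hc.l1_sstar, dotProduct, Finset.mul_sum, Pi.smul_apply,
      Pi.one_apply, Function.comp_apply, smul_eq_mul, mul_add]
    rw [add_comm]
    simp only [one_mul, mul_comm t]
  have hmem := hc.add_edges_mem_Wlev (δ := δ) (fun k => ht.trans (hxt k))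
    (fun k => ht.trans (hst k)) (by rw [hgap, div_mul_cancel₀ δ hL.ne'])
  refine le_trans ?_ (le_csSup ⟨δ / L, ?_⟩ ⟨_, hmem, rfl⟩)
  · exact le_min (le_ciInf hxt) (le_ciInf hst)
  · rintro _ ⟨w, hw, rfl⟩
    exact hc.min_iInf_le_div hw

lemma eventually_rrad_eq (hc : IsStrictlyComplementaryBasis hmn A b c xstar sstar) :
    ∀ᶠ δ in 𝓝 0, 0 ≤ δ → rrad A b c δ = δ / (l1 xstar + l1 sstar) := by
  rcases isEmpty_or_nonempty (Fin n) with hn | hn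
  · -- for `n = 0` all infima are the junk value `0`, and `δ / 0 = 0`
    refine Eventually.of_forall fun δ hδ => ?_
    have hrad : {t | ∃ w ∈ Wlev A b c δ, t = min (⨅ i, w.1 i) (⨅ i, w.2 i)} = {0} := by
      ext t
      simp only [Real.iInf_of_isEmpty, min_self, Set.mem_ofPred_eq, Set.mem_singleton_iff]
      exact ⟨fun ⟨_, _, ht⟩ => ht, fun ht => ⟨_, hc.star_mem_Wlev hδ, ht⟩⟩
    rw [rrad, hrad, csSup_singleton]
    simp [l1]
  · filter_upwards [hc.eventually_le_rrad] with δ hle hδ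
    refine le_antisymm (Real.sSup_le ?_ (div_nonneg hδ hc.l1_add_l1_pos.le)) (hle hδ)
    rintro _ ⟨w, hw, rfl⟩
    exact hc.min_iInf_le_div hw

end IsStrictlyComplementaryBasis

/-- Lemma 8 of the paper. Under the unique-optimum assumption, there is
`δ̄ > 0` such that for all `0 ≤ δ ≤ δ̄`: `D̂_δ ≤ D_δ ≤ 2·D̂_δ` and
`r_δ = δ/(‖x*‖₁ + ‖s*‖₁)`, where `D̂_δ := δ · max{max_j √(‖(B⁻¹N)_{·,j}‖²+1)/s*_{m+j},
max_i √(‖(B⁻¹N)_{i,·}‖²+1)/x*_i}` (which is `δ · PhiFactor`). -/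
theorem sublevel_diameter_radius (m n : ℕ) (hmn : m ≤ n)
    (A : Matrix (Fin m) (Fin n) ℝ) (b : Fin m → ℝ) (c : Fin n → ℝ)
    (xstar : Fin n → ℝ) (ystar : Fin m → ℝ) (sstar : Fin n → ℝ)
    (h : UniqueOpt hmn A b c xstar ystar sstar) :
    ∃ δbar : ℝ, 0 < δbar ∧ ∀ δ : ℝ, 0 ≤ δ → δ ≤ δbar →
      (δ * PhiFactor hmn A xstar sstar ≤ Ddiam A b c δ ∧
        Ddiam A b c δ ≤ 2 * (δ * PhiFactor hmn A xstar sstar) ∧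
        rrad A b c δ = δ / (l1 xstar + l1 sstar)) := by
  have hc := h.isStrictlyComplementaryBasis
  obtain ⟨δbar, hδbar, hsmall⟩ := (nhds_basis_Icc_pos (0 : ℝ)).eventually_iff.1
    (hc.eventually_mul_PhiFactor_le_Ddiam.and hc.eventually_rrad_eq)
  refine ⟨δbar, hδbar, fun δ hδ hδle => ?_⟩
  obtain ⟨hlower, hrad⟩ := hsmall ⟨by linarith, by linarith⟩
  exact ⟨hlower hδ, hc.Ddiam_le hδ, hrad hδ⟩

end LPPaper
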